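/- Energy identity under the Legendre transform: for every y ∈ Ω and every a ∈ {1,…,n}, the weighted L² energy density of the variation of φ equals the Euclidean L² energy density of the variation of its Legendre dual: ∫_{ℝᵐ} (∂_{y_a}φ(y,ρ))² · det(∇²_ρφ(y,ρ)) dρ = ∫_{P} (∂_{y_a}u(y,x))² dx (as an equality in [0,∞]). In particular the pushforward of the measure det(∇²_ρφ(y,ρ)) dρ under the gradient map ∇_ρφ(y,·) is Lebesgue measure on P, and the harmonic map energy of φ with respect to the L² metric equals the Dirichlet energy of u. -/

import Mathlib

open scoped BigOperators
open MeasureTheory Real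

noncomputable section

/-- Partial derivative of `f` at `p` in the `i`-th coordinate direction. -/
def pd {k : ℕ} (f : (Fin k → ℝ) → ℝ) (i : Fin k) (p : Fin k → ℝ) : ℝ :=
  fderiv ℝ f p (Pi.single i 1)

/-- Euclidean gradient, as the vector of partial derivatives. -/
def grad {k : ℕ} (f : (Fin k → ℝ) → ℝ) (p : Fin k → ℝ) : Fin k → ℝ :=
  fun i => pd f i p

/-- Hessian matrix of second partial derivatives. -/
def hess {k : ℕ} (f : (Fin k → ℝ) → ℝ) (p : Fin k → ℝ) : Matrix (Fin k) (Fin k) ℝ :=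
  Matrix.of fun i j => pd (fun q => pd f j q) i p

/-- Euclidean Laplacian. -/
def lap {k : ℕ} (f : (Fin k → ℝ) → ℝ) (p : Fin k → ℝ) : ℝ :=
  ∑ i, pd (fun q => pd f i q) i p

/-- Euclidean inner product on `Fin k → ℝ`. -/
def dotp {k : ℕ} (v w : Fin k → ℝ) : ℝ := ∑ i, v i * w i

/-!
Positive semidefiniteness of the Hessian puts `φ y` above its tangent planes, which is the
Fenchel–Young inequality `⟨x, ρ⟩ - φ(y', ρ) ≤ u(y', x)`, with equality at `ρ = ρ(y', x)`.
So `y' ↦ u(y', x) + φ(y', ρ(y, x))` is minimal at `y' = y` and its derivative vanishes there: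
`∂_{y_a} u(y, x) = -∂_{y_a} φ(y, ρ(y, x))` (envelope theorem). Both claims are then the change of
variables `x = ∇_ρφ(y, ρ)`, whose Jacobian determinant is `det ∇²_ρφ(y, ρ) > 0`.
-/

open Set Filter Topology
open scoped Matrix

section Calculus

variable {k : ℕ} {f : (Fin k → ℝ) → ℝ}

lemma fderiv_apply_eq_dotProduct_grad (p v : Fin k → ℝ) :
    fderiv ℝ f p v = v ⬝ᵥ grad f p := by
  conv_lhs => rw [← Finset.univ_sum_single v]
  simp only [map_sum, dotProduct, grad, pd]
  refine Finset.sum_congr rfl fun j _ => ?_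
  rw [← smul_eq_mul, ← map_smul, ← Pi.single_smul', smul_eq_mul, mul_one]

lemma differentiable_pd (hf : ContDiff ℝ 2 f) (i : Fin k) : Differentiable ℝ (pd f i) :=
  ((hf.fderiv_right (m := 1) le_rfl).differentiable one_ne_zero).clm_apply
    (differentiable_const _)

lemma differentiable_grad (hf : ContDiff ℝ 2 f) : Differentiable ℝ (grad f) :=
  differentiable_pi.2 (differentiable_pd hf)

lemma fderiv_grad_apply (hf : ContDiff ℝ 2 f) (p v : Fin k → ℝ) :
    fderiv ℝ (grad f) p v = v ᵥ* hess f p := by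
  rw [show grad f = fun q i => pd f i q from rfl, fderiv_pi fun i => differentiable_pd hf i p]
  ext i
  rw [ContinuousLinearMap.pi_apply, fderiv_apply_eq_dotProduct_grad]
  rfl

lemma det_fderiv_grad (hf : ContDiff ℝ 2 f) (p : Fin k → ℝ) :
    (fderiv ℝ (grad f) p).det = (hess f p).det := by
  have hmatrix : LinearMap.toMatrix' (fderiv ℝ (grad f) p : (Fin k → ℝ) →ₗ[ℝ] (Fin k → ℝ))
      = (hess f p)ᵀ := by
    ext i j
    rw [LinearMap.toMatrix'_apply, ContinuousLinearMap.coe_coe, fderiv_grad_apply hf,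
      Matrix.single_one_vecMul]
    rfl
  rw [ContinuousLinearMap.det, ← LinearMap.det_toMatrix', hmatrix, Matrix.det_transpose]

end Calculus

lemma HasDerivAt.const_dotProduct {ι : Type*} [Fintype ι] {g : ℝ → ι → ℝ} {g' : ι → ℝ}
    {t : ℝ} (hg : HasDerivAt g g' t) (v : ι → ℝ) :
    HasDerivAt (fun s => v ⬝ᵥ g s) (v ⬝ᵥ g') t :=
  HasDerivAt.fun_sum fun i _ => (hasDerivAt_pi.1 hg i).const_mul (v i)

section Convexity

variable {k : ℕ} {f : (Fin k → ℝ) → ℝ}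

/-- Restricted to the line `t ↦ ρ₀ + t (ρ - ρ₀)`, `f` has monotone derivative since its second
derivative is the Hessian quadratic form; the mean value theorem on `[0, 1]` concludes. -/
lemma add_dotProduct_grad_le (hf : ContDiff ℝ 2 f) (hpos : ∀ p, (hess f p).PosSemidef)
    (ρ₀ ρ : Fin k → ℝ) : f ρ₀ + (ρ - ρ₀) ⬝ᵥ grad f ρ₀ ≤ f ρ := by
  set v := ρ - ρ₀
  set L : ℝ → Fin k → ℝ := fun t => ρ₀ + t • v
  have hL : ∀ t, HasDerivAt L v t := fun t => by
    have h := ((hasDerivAt_id t).smul_const v).const_add ρ₀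
    rwa [one_smul] at h
  have hG : ∀ t, HasDerivAt (fun t => f (L t)) (v ⬝ᵥ grad f (L t)) t := fun t => by
    rw [← fderiv_apply_eq_dotProduct_grad]
    exact ((hf.differentiable two_ne_zero) (L t)).hasFDerivAt.comp_hasDerivAt t (hL t)
  have hG' : ∀ t, HasDerivAt (fun t => v ⬝ᵥ grad f (L t)) (v ⬝ᵥ (v ᵥ* hess f (L t))) t :=
    fun t => by
      rw [← fderiv_grad_apply hf]
      exact ((differentiable_grad hf (L t)).hasFDerivAt.comp_hasDerivAt t (hL t)).const_dotProduct v
  have hmono : Monotone fun t => v ⬝ᵥ grad f (L t) := by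
    refine monotone_of_hasDerivAt_nonneg hG' fun t => ?_
    rw [dotProduct_comm, ← Matrix.dotProduct_mulVec]
    simpa using (hpos (L t)).dotProduct_mulVec_nonneg v
  obtain ⟨c, hc, hslope⟩ := exists_hasDerivAt_eq_slope _ _ zero_lt_one
    (fun t _ => (hG t).continuousAt.continuousWithinAt) fun t _ => hG t
  have hc0 := hmono hc.1.le
  simp only [L, zero_smul, add_zero, one_smul, v, add_sub_cancel, sub_zero, div_one]
    at hslope hc0
  linarith

lemma dotp_sub_le_of_grad_eq (hf : ContDiff ℝ 2 f) (hpos : ∀ p, (hess f p).PosSemidef)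
    {x ρ₀ : Fin k → ℝ} (hx : grad f ρ₀ = x) (ρ : Fin k → ℝ) :
    dotp x ρ - f ρ ≤ dotp x ρ₀ - f ρ₀ := by
  have h := add_dotProduct_grad_le hf hpos ρ₀ ρ
  rw [hx, sub_dotProduct, dotProduct_comm ρ, dotProduct_comm ρ₀] at h
  change x ⬝ᵥ ρ - f ρ ≤ x ⬝ᵥ ρ₀ - f ρ₀
  linarith

end Convexity

lemma pd_legendre_eq_neg_pd {m n : ℕ} {Ω : Set (Fin n → ℝ)} {y : Fin n → ℝ} (hΩ : Ω ∈ 𝓝 y)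
    {φ : (Fin n → ℝ) → (Fin m → ℝ) → ℝ} {R : (Fin n → ℝ) → Fin m → ℝ}
    {u : (Fin n → ℝ) → ℝ} {x : Fin m → ℝ}
    (hφ : ∀ y' ∈ Ω, ContDiff ℝ 2 (φ y'))
    (hpos : ∀ y' ∈ Ω, ∀ ρ, (hess (φ y') ρ).PosSemidef)
    (hR : ∀ y' ∈ Ω, grad (φ y') (R y') = x)
    (hu : ∀ y' ∈ Ω, u y' = dotp x (R y') - φ y' (R y'))
    (hud : DifferentiableAt ℝ u y) (hφd : DifferentiableAt ℝ (fun y' => φ y' (R y)) y)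
    (a : Fin n) : pd u a y = -pd (fun y' => φ y' (R y)) a y := by
  have hmin : IsLocalMin (fun y' => u y' + φ y' (R y)) y := by
    filter_upwards [hΩ] with y' hy'
    have := dotp_sub_le_of_grad_eq (hφ y' hy') (hpos y' hy') (hR y' hy') (R y)
    rw [hu y (mem_of_mem_nhds hΩ), hu y' hy']
    linarith
  have h := congrArg (· (Pi.single a 1)) hmin.fderiv_eq_zero
  rw [fderiv_fun_add hud hφd] at h
  exact eq_neg_of_add_eq_zero_left h

section ChangeOfVariables

variable {k : ℕ} {f : (Fin k → ℝ) → ℝ}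

lemma abs_det_fderiv_grad (hf : ContDiff ℝ 2 f) (hdet : ∀ ρ, 0 ≤ (hess f ρ).det)
    (ρ : Fin k → ℝ) : |(fderiv ℝ (grad f) ρ).det| = (hess f ρ).det := by
  rw [det_fderiv_grad hf, abs_of_nonneg (hdet ρ)]

lemma lintegral_range_grad (hf : ContDiff ℝ 2 f) (hdet : ∀ ρ, 0 ≤ (hess f ρ).det)
    (hinj : Function.Injective (grad f)) (F : (Fin k → ℝ) → ENNReal) :
    ∫⁻ x in range (grad f), F x
      = ∫⁻ ρ, ENNReal.ofReal (hess f ρ).det * F (grad f ρ) := by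
  have h := lintegral_image_eq_lintegral_abs_det_fderiv_mul volume MeasurableSet.univ
    (fun ρ _ => (differentiable_grad hf ρ).hasFDerivAt.hasFDerivWithinAt) hinj.injOn F
  simpa only [image_univ, Measure.restrict_univ, abs_det_fderiv_grad hf hdet] using h

lemma map_grad_withDensity_det_hess (hf : ContDiff ℝ 2 f) (hdet : ∀ ρ, 0 ≤ (hess f ρ).det)
    (hinj : Function.Injective (grad f)) :
    Measure.map (grad f) (volume.withDensity fun ρ => ENNReal.ofReal (hess f ρ).det)
      = volume.restrict (range (grad f)) := by
  have h := map_withDensity_abs_det_fderiv_eq_addHaar volume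
    MeasurableSet.univ.nullMeasurableSet
    (fun ρ _ => (differentiable_grad hf ρ).hasFDerivAt.hasFDerivWithinAt) hinj.injOn
  simpa only [image_univ, Measure.restrict_univ, abs_det_fderiv_grad hf hdet] using h

end ChangeOfVariables

section Slices

variable {E F G : Type*} [NormedAddCommGroup E] [NormedSpace ℝ E] [NormedAddCommGroup F]
  [NormedSpace ℝ F] [NormedAddCommGroup G] [NormedSpace ℝ G] {n : WithTop ℕ∞}
  {φ : E → F → G} {s : Set (E × F)} {y : E} {x : F}

lemma ContDiffOn.contDiffAt_uncurry_left (hφ : ContDiffOn ℝ n (fun p : E × F => φ p.1 p.2) s)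
    (hs : s ∈ 𝓝 (y, x)) : ContDiffAt ℝ n (fun y' => φ y' x) y :=
  (hφ.contDiffAt hs).comp y (contDiffAt_id.prodMk contDiffAt_const)

lemma ContDiffOn.contDiffAt_uncurry_right (hφ : ContDiffOn ℝ n (fun p : E × F => φ p.1 p.2) s)
    (hs : s ∈ 𝓝 (y, x)) : ContDiffAt ℝ n (φ y) x :=
  (hφ.contDiffAt hs).comp x (contDiffAt_const.prodMk contDiffAt_id)

end Slices

theorem legendre_energy_identity_general
    {m n : ℕ}
    (Ω : Set (Fin n → ℝ)) (hΩ : IsOpen Ω)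
    (P : Set (Fin m → ℝ)) (hP : IsOpen P)
    (φ : (Fin n → ℝ) → (Fin m → ℝ) → ℝ)
    (hφ : ContDiffOn ℝ (⊤ : ℕ∞)
      (fun p : (Fin n → ℝ) × (Fin m → ℝ) => φ p.1 p.2) (Ω ×ˢ Set.univ))
    (hpos : ∀ y ∈ Ω, ∀ ρ : Fin m → ℝ, (hess (φ y) ρ).PosDef)
    (R : (Fin n → ℝ) → (Fin m → ℝ) → (Fin m → ℝ))
    (hmem : ∀ y ∈ Ω, ∀ ρ : Fin m → ℝ, grad (φ y) ρ ∈ P)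
    (hR₁ : ∀ y ∈ Ω, ∀ x ∈ P, grad (φ y) (R y x) = x)
    (hR₂ : ∀ y ∈ Ω, ∀ ρ : Fin m → ℝ, R y (grad (φ y) ρ) = ρ)
    (u : (Fin n → ℝ) → (Fin m → ℝ) → ℝ)
    (hu : ∀ y ∈ Ω, ∀ x ∈ P, u y x = dotp x (R y x) - φ y (R y x))
    (husm : ContDiffOn ℝ (⊤ : ℕ∞)
      (fun p : (Fin n → ℝ) × (Fin m → ℝ) => u p.1 p.2) (Ω ×ˢ P)) :
    ∀ y ∈ Ω,
      (∀ a : Fin n,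
          (∫⁻ ρ : Fin m → ℝ,
              ENNReal.ofReal
                ((pd (fun y' => φ y' ρ) a y) ^ 2 * (hess (φ y) ρ).det))
            = ∫⁻ x in P, ENNReal.ofReal ((pd (fun y' => u y' x) a y) ^ 2))
        ∧ Measure.map (grad (φ y))
              (volume.withDensity fun ρ => ENNReal.ofReal (hess (φ y) ρ).det)
            = volume.restrict P := by
  intro y hy
  have hnhds : ∀ y' ∈ Ω, ∀ ρ : Fin m → ℝ, Ω ×ˢ univ ∈ 𝓝 (y', ρ) := fun y' hy' ρ =>
    (hΩ.prod isOpen_univ).mem_nhds ⟨hy', trivial⟩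
  have hφ₂ : ∀ y' ∈ Ω, ContDiff ℝ 2 (φ y') := fun y' hy' =>
    contDiff_iff_contDiffAt.2 fun ρ =>
      (hφ.contDiffAt_uncurry_right (hnhds y' hy' ρ)).of_le (WithTop.coe_le_coe.2 le_top)
  have hrange : range (grad (φ y)) = P :=
    (range_subset_iff.2 (hmem y hy)).antisymm fun x hx => ⟨R y x, hR₁ y hy x hx⟩
  have hinj : Function.Injective (grad (φ y)) := Function.LeftInverse.injective (hR₂ y hy)
  have hdet : ∀ ρ, 0 ≤ (hess (φ y) ρ).det := fun ρ => (hpos y hy ρ).det_pos.le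
  refine ⟨fun a => ?_, hrange ▸ map_grad_withDensity_det_hess (hφ₂ y hy) hdet hinj⟩
  rw [← hrange, lintegral_range_grad (hφ₂ y hy) hdet hinj]
  refine lintegral_congr fun ρ => ?_
  have hx := hmem y hy ρ
  have henvelope := pd_legendre_eq_neg_pd (hΩ.mem_nhds hy) hφ₂
    (fun y' hy' ρ => (hpos y' hy' ρ).posSemidef) (fun y' hy' => hR₁ y' hy' _ hx)
    (fun y' hy' => hu y' hy' _ hx)
    ((husm.contDiffAt_uncurry_left ((hΩ.prod hP).mem_nhds ⟨hy, hx⟩)).differentiableAt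
      (by simp))
    ((hφ.contDiffAt_uncurry_left (hnhds y hy _)).differentiableAt (by simp)) a
  rw [hR₂ y hy] at henvelope
  rw [henvelope, neg_sq, ENNReal.ofReal_mul (sq_nonneg _), mul_comm]

/-- **Energy identity under the Legendre transform:** for `y ∈ Ω` and each `a`,
`∫_{ℝᵐ} (∂_{y_a}φ)² det(∇²_ρφ) dρ = ∫_P (∂_{y_a}u)² dx` (in `[0,∞]`); moreover the
pushforward of `det(∇²_ρφ(y,ρ)) dρ` under `∇_ρφ(y,·)` is Lebesgue measure on `P`. -/
theorem legendre_energy_identity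
    {m n : ℕ} (hm : 1 ≤ m) (hn : 1 ≤ n)
    (Ω : Set (Fin n → ℝ)) (hΩ : IsOpen Ω)
    (P : Set (Fin m → ℝ)) (hP : IsOpen P)
    (φ : (Fin n → ℝ) → (Fin m → ℝ) → ℝ)
    (hφ : ContDiffOn ℝ (⊤ : ℕ∞)
      (fun p : (Fin n → ℝ) × (Fin m → ℝ) => φ p.1 p.2) (Ω ×ˢ Set.univ))
    (hpos : ∀ y ∈ Ω, ∀ ρ : Fin m → ℝ, (hess (φ y) ρ).PosDef)
    (R : (Fin n → ℝ) → (Fin m → ℝ) → (Fin m → ℝ))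
    (hmem : ∀ y ∈ Ω, ∀ ρ : Fin m → ℝ, grad (φ y) ρ ∈ P)
    (hR₁ : ∀ y ∈ Ω, ∀ x ∈ P, grad (φ y) (R y x) = x)
    (hR₂ : ∀ y ∈ Ω, ∀ ρ : Fin m → ℝ, R y (grad (φ y) ρ) = ρ)
    (u : (Fin n → ℝ) → (Fin m → ℝ) → ℝ)
    (hu : ∀ y ∈ Ω, ∀ x ∈ P, u y x = dotp x (R y x) - φ y (R y x))
    (husm : ContDiffOn ℝ (⊤ : ℕ∞)
      (fun p : (Fin n → ℝ) × (Fin m → ℝ) => u p.1 p.2) (Ω ×ˢ P)) :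
    ∀ y ∈ Ω,
      (∀ a : Fin n,
          (∫⁻ ρ : Fin m → ℝ,
              ENNReal.ofReal
                ((pd (fun y' => φ y' ρ) a y) ^ 2 * (hess (φ y) ρ).det))
            = ∫⁻ x in P, ENNReal.ofReal ((pd (fun y' => u y' x) a y) ^ 2))
        ∧ Measure.map (grad (φ y))
              (volume.withDensity fun ρ => ENNReal.ofReal (hess (φ y) ρ).det)
            = volume.restrict P :=
  legendre_energy_identity_general Ω hΩ P hP φ hφ hpos R hmem hR₁ hR₂ u hu husm
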